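/- arXiv:1511.00084 — 5 statements merged into one kernel-verified Lean document; each statement's English description precedes it below -/
import Mathlib

section
/- With notation as above, setting c₀(j) = ((1-k)j - 1)[j-1], for 1 ≤ i, j ≤ s the identity (ki - i - 1)[j-1] · (i+s)[s-j] = Σ_{t=1}^{j} (i+s)[s-t] · c_{j-t}(j) holds, i.e. the matrix M'' = ((ki-i-1)[j-1]·(i+s)[s-j])_{1≤i,j≤s} factors as M'' = M₁·M₂ where M₁ = ((i+s)[s-t])_{1≤i,t≤s} and M₂ = (c_{j-t}(j))_{1≤t,j≤s}. -/
/-!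
Evaluate the expansion of `((k-1)x-1)[j-1]` at `x = i` and multiply by `(i+s)[s-j]`: since
`(i+s)[s-j] · (i+j)[t] = (i+s)[s-j+t]`, the substitution `t ↦ j - t` turns the right-hand side
into `Σ_{t=1}^{j} (i+s)[s-t] · c_{j-t}(j)`. The matrix identity is the same statement entrywise,
the upper triangular shape of `M₂` cutting the inner sum off at `t = j`.
-/

open Polynomial Finset

theorem descPochhammer_eval_mul_eval_sub {R : Type*} [CommRing R] (a b : ℕ) (x : R) :
    (descPochhammer R a).eval x * (descPochhammer R b).eval (x - a) =
      (descPochhammer R (a + b)).eval x := by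
  simpa using congrArg (eval x) (descPochhammer_mul (R := R) a b)

theorem Finset.sum_Icc_one_sub_eq_sum_range {M : Type*} [AddCommMonoid M] (f : ℕ → M) (j : ℕ) :
    ∑ t ∈ Icc 1 j, f (j - t) = ∑ t ∈ range j, f t := by
  rw [← Ico_add_one_right_eq_Icc, sum_Ico_reflect f 1 le_rfl, range_eq_Ico]
  simp

theorem Finset.sum_Icc_one_eq_sum_range_succ {M : Type*} [AddCommMonoid M] (f : ℕ → M) (j : ℕ) :
    ∑ t ∈ Icc 1 j, f t = ∑ t ∈ range j, f (t + 1) := by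
  rw [← Ico_add_one_right_eq_Icc, sum_Ico_eq_sum_range]
  simp [add_comm]

theorem Fin.sum_ite_val_le_eq_sum_range {M : Type*} [AddCommMonoid M] {s j : ℕ} (hj : j < s)
    (f : ℕ → M) :
    ∑ t : Fin s, (if (t : ℕ) ≤ j then f t else 0) = ∑ t ∈ range (j + 1), f t := by
  rw [Fin.sum_univ_eq_sum_range (fun t => if t ≤ j then f t else 0), ← sum_filter]
  congr 1
  ext t
  simp only [mem_filter, mem_range]
  omega

theorem eval_mul_descPochhammer_eq_sum_Icc {R : Type*} [CommRing R] {P : R[X]} {c : ℕ → R}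
    {j m : ℕ} (hjm : j ≤ m)
    (hP : P = ∑ t ∈ range j, C (c t) * (descPochhammer R t).comp (X + C (j : R))) (x : R) :
    P.eval x * (descPochhammer R (m - j)).eval (x + m) =
      ∑ t ∈ Icc 1 j, (descPochhammer R (m - t)).eval (x + m) * c (j - t) := by
  have hshift : x + m - ((m - j : ℕ) : R) = x + j := by
    rw [Nat.cast_sub hjm]
    ring
  calc P.eval x * (descPochhammer R (m - j)).eval (x + m)
      = ∑ t ∈ range j, (descPochhammer R (m - j + t)).eval (x + m) * c t := by
        rw [hP, eval_finsetSum, sum_mul]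
        refine sum_congr rfl fun t _ => ?_
        rw [← descPochhammer_eval_mul_eval_sub, hshift]
        simp only [eval_mul, eval_C, eval_comp, eval_add, eval_X]
        ring
    _ = ∑ t ∈ Icc 1 j, (descPochhammer R (m - t)).eval (x + m) * c (j - t) := by
        rw [← sum_Icc_one_sub_eq_sum_range]
        refine sum_congr rfl fun t ht => ?_
        rw [mem_Icc] at ht
        rw [show m - j + (j - t) = m - t by omega]

theorem stmt_6_general (k s : ℕ) (c : ℕ → ℕ → ℚ)
    (hexp : ∀ j : ℕ, 1 ≤ j → j ≤ s →
      (descPochhammer ℚ (j - 1)).comp (C ((k : ℚ) - 1) * X - 1) =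
        ∑ t ∈ Finset.range j, C (c t j) * (descPochhammer ℚ t).comp (X + C (j : ℚ))) :
    (∀ i j : ℕ, 1 ≤ i → i ≤ s → 1 ≤ j → j ≤ s →
      (descPochhammer ℚ (j - 1)).eval ((k : ℚ) * i - i - 1) *
          (descPochhammer ℚ (s - j)).eval ((i : ℚ) + s) =
        ∑ t ∈ Finset.Icc 1 j,
          (descPochhammer ℚ (s - t)).eval ((i : ℚ) + s) * c (j - t) j) ∧
    (Matrix.of fun i j : Fin s =>
        (descPochhammer ℚ ((j : ℕ) + 1 - 1)).eval ((k : ℚ) * ((i : ℕ) + 1) - ((i : ℕ) + 1) - 1) *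
          (descPochhammer ℚ (s - ((j : ℕ) + 1))).eval (((i : ℕ) + 1 : ℚ) + s)) =
      (Matrix.of fun i t : Fin s =>
          (descPochhammer ℚ (s - ((t : ℕ) + 1))).eval (((i : ℕ) + 1 : ℚ) + s)) *
        (Matrix.of fun t j : Fin s =>
          if (t : ℕ) ≤ (j : ℕ) then c ((j : ℕ) - (t : ℕ)) ((j : ℕ) + 1) else 0) := by
  have row (i j : ℕ) (hj₁ : 1 ≤ j) (hjs : j ≤ s) :
      (descPochhammer ℚ (j - 1)).eval ((k : ℚ) * i - i - 1) *
          (descPochhammer ℚ (s - j)).eval ((i : ℚ) + s) =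
        ∑ t ∈ Icc 1 j, (descPochhammer ℚ (s - t)).eval ((i : ℚ) + s) * c (j - t) j := by
    rw [← eval_mul_descPochhammer_eq_sum_Icc hjs (hexp j hj₁ hjs) i]
    simp only [eval_comp, eval_sub, eval_mul, eval_C, eval_X, eval_one]
    rw [show ((k : ℚ) - 1) * i - 1 = k * i - i - 1 by ring]
  refine ⟨fun i j _ _ hj₁ hjs => row i j hj₁ hjs, ?_⟩
  ext i j
  simp only [Matrix.mul_apply, Matrix.of_apply, mul_ite, mul_zero]
  have hrow := row (i + 1) (j + 1) (by omega) j.isLt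
  simp only [Nat.cast_add, Nat.cast_one] at hrow
  rw [hrow, sum_Icc_one_eq_sum_range_succ]
  simp only [Nat.add_sub_add_right]
  exact (Fin.sum_ite_val_le_eq_sum_range (M := ℚ) j.isLt _).symm

/-- With `c t j` the coefficients of `((k-1)x-1)[j-1]` in the basis `{(x+j)[t]}`,
the identity `(ki-i-1)[j-1]·(i+s)[s-j] = Σ_{t=1}^{j} (i+s)[s-t]·c_{j-t}(j)` holds,
i.e. `M'' = M₁ · M₂`. -/
theorem stmt_6 (k s : ℕ) (hk : 1 ≤ k) (hs : 1 ≤ s) (c : ℕ → ℕ → ℚ)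
    (hexp : ∀ j : ℕ, 1 ≤ j → j ≤ s →
      (descPochhammer ℚ (j - 1)).comp (C ((k : ℚ) - 1) * X - 1) =
        ∑ t ∈ Finset.range j, C (c t j) * (descPochhammer ℚ t).comp (X + C (j : ℚ))) :
    (∀ i j : ℕ, 1 ≤ i → i ≤ s → 1 ≤ j → j ≤ s →
      (descPochhammer ℚ (j - 1)).eval ((k : ℚ) * i - i - 1) *
          (descPochhammer ℚ (s - j)).eval ((i : ℚ) + s) =
        ∑ t ∈ Finset.Icc 1 j,
          (descPochhammer ℚ (s - t)).eval ((i : ℚ) + s) * c (j - t) j) ∧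
    (Matrix.of fun i j : Fin s =>
        (descPochhammer ℚ ((j : ℕ) + 1 - 1)).eval ((k : ℚ) * ((i : ℕ) + 1) - ((i : ℕ) + 1) - 1) *
          (descPochhammer ℚ (s - ((j : ℕ) + 1))).eval (((i : ℕ) + 1 : ℚ) + s)) =
      (Matrix.of fun i t : Fin s =>
          (descPochhammer ℚ (s - ((t : ℕ) + 1))).eval (((i : ℕ) + 1 : ℚ) + s)) *
        (Matrix.of fun t j : Fin s =>
          if (t : ℕ) ≤ (j : ℕ) then c ((j : ℕ) - (t : ℕ)) ((j : ℕ) + 1) else 0) :=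
  stmt_6_general k s c hexp
end

section
/- Let γ ∈ ℚ_p(μ_p) be a root of the Artin–Hasse exponential E(t) = exp(Σ_{m≥0} t^{p^m}/p^m) with v(γ) = 1/(p-1), and write θ(t) = E(γt) = Σ_{m≥0} γ_m t^m. Then v(γ_m) ≥ m/(p-1) for all m ≥ 0, and γ_m = γ^m/m! for 0 ≤ m ≤ p - 1. -/
/-!
By Dwork's argument, the Artin–Hasse exponential `E = exp(S)` satisfies
`E(X)^p = E(X^p) · exp(pX)`, because `p S(X) - S(X^p) = p X`. Inducting on `n`, let `P` be the
truncation of `E` below degree `n`, which is integral. Then the coefficient of `X^n` in `E^p` is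
that of `P^p` plus `p e_n`. Now `P^p ≡ P(X^p) mod p` (Frobenius) and `exp(pX) ≡ 1 mod p`
(since `v(p^j/j!) ≥ 1` for `j ≥ 1`). Hence `p e_n ≡ 0 mod p`, i.e. `e_n` is integral, and
`v(e_m γ^m) ≥ m/(p-1)`. For `m < p`, `S ≡ X mod X^p`, so the coefficients of `E` agree with
those of `exp X` there.
-/

open PowerSeries

namespace PowerSeries

section ExpSubst

variable {A : Type*} [CommRing A]

theorem eq_of_derivative_eq_mul [IsAddTorsionFree A] {H F G : A⟦X⟧}
    (hF : d⁄dX A F = H * F) (hG : d⁄dX A G = H * G)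
    (h0 : constantCoeff F = constantCoeff G) : F = G := by
  ext n
  induction n using Nat.strong_induction_on with
  | _ n ih =>
    rcases n with - | n
    · simpa using h0
    · have hmul : coeff n (H * F) = coeff n (H * G) := by
        simp only [coeff_mul]
        refine Finset.sum_congr rfl fun ij hij => ?_
        rw [ih ij.2 (by have := Finset.HasAntidiagonal.mem_antidiagonal.mp hij; omega)]
      have h := congrArg (coeff n) hF
      rw [hmul, ← hG, coeff_derivative, coeff_derivative] at h
      refine (smul_right_inj (Nat.succ_ne_zero n)).mp ?_
      simp only [nsmul_eq_mul]
      push_cast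
      linear_combination h

theorem coeff_pow_eq_zero_of_lt {f : A⟦X⟧} (hf : constantCoeff f = 0) {m n : ℕ} (h : m < n) :
    coeff m (f ^ n) = 0 :=
  X_pow_dvd_iff.mp (pow_dvd_pow_of_dvd (X_dvd_iff.mpr hf) n) m h

variable [Algebra ℚ A]

theorem derivative_exp_subst {f : A⟦X⟧} (hf : HasSubst f) :
    d⁄dX A ((exp A).subst f) = (exp A).subst f * d⁄dX A f := by
  rw [derivative_subst hf, derivative_exp]

theorem constantCoeff_exp_subst {f : A⟦X⟧} (hf : constantCoeff f = 0) :
    constantCoeff ((exp A).subst f) = 1 := by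
  rw [← coeff_zero_eq_constantCoeff_apply, coeff_subst' (HasSubst.of_constantCoeff_zero' hf),
    finsum_eq_single _ 0 fun d hd => by simp [coeff_zero_eq_constantCoeff, hf, hd]]
  simp

theorem exp_subst_add [IsAddTorsionFree A] {f g : A⟦X⟧} (hf : constantCoeff f = 0)
    (hg : constantCoeff g = 0) :
    (exp A).subst (f + g) = (exp A).subst f * (exp A).subst g := by
  have hf' := HasSubst.of_constantCoeff_zero' hf
  have hg' := HasSubst.of_constantCoeff_zero' hg
  have hfg' := HasSubst.of_constantCoeff_zero' (a := f + g) (by simp [hf, hg])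
  refine eq_of_derivative_eq_mul (H := d⁄dX A (f + g)) ?_ ?_ ?_
  · rw [derivative_exp_subst hfg', mul_comm]
  · rw [Derivation.leibniz, derivative_exp_subst hf', derivative_exp_subst hg', map_add,
      smul_eq_mul, smul_eq_mul]
    ring
  · simp [constantCoeff_exp_subst, hf, hg]

theorem exp_subst_nsmul [IsAddTorsionFree A] {f : A⟦X⟧} (hf : constantCoeff f = 0) (n : ℕ) :
    (exp A).subst (n • f) = (exp A).subst f ^ n := by
  induction n with
  | zero => simp [subst_zero_eq_C_constantCoeff]
  | succ n ih => rw [succ_nsmul, exp_subst_add (by simp [hf]) hf, ih, pow_succ]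

theorem expand_exp_subst (p : ℕ) (hp : p ≠ 0) {f : A⟦X⟧} (hf : constantCoeff f = 0) :
    expand p hp ((exp A).subst f) = (exp A).subst (expand p hp f) :=
  expand_subst p hp (HasSubst.of_constantCoeff_zero' hf) _

end ExpSubst

theorem coeff_exp_subst {K : Type*} [Field K] [CharZero K] {f : K⟦X⟧} (hf : constantCoeff f = 0)
    (m : ℕ) :
    coeff m ((exp K).subst f) = ∑ n ∈ Finset.range (m + 1), coeff m (f ^ n) / n.factorial := by
  rw [coeff_subst' (HasSubst.of_constantCoeff_zero' hf),
    finsum_eq_sum_of_support_subset (s := Finset.range (m + 1))]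
  · refine Finset.sum_congr rfl fun n _ => ?_
    simp [div_eq_inv_mul]
  · intro n hn
    contrapose! hn
    simp [coeff_pow_eq_zero_of_lt hf (by simpa using hn)]

theorem coeff_pow_eq_coeff_trunc_pow_add {R : Type*} [CommRing R] {F : R⟦X⟧}
    (hF : constantCoeff F = 1) {n : ℕ} (hn : n ≠ 0) (k : ℕ) :
    coeff n (F ^ k) = coeff n ((trunc n F : R⟦X⟧) ^ k) + k * coeff n F := by
  set P : R⟦X⟧ := (trunc n F : R⟦X⟧)
  obtain ⟨Q, hQ⟩ : X ^ n ∣ F - P := X_pow_dvd_iff.mpr fun i hi => by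
    simp [P, coeff_trunc, hi]
  have hQn : coeff n (F - P) = coeff n F := by simp [P, coeff_trunc]
  have hP₀ : constantCoeff P = 1 := by
    rw [← coeff_zero_eq_constantCoeff_apply]
    simp [P, coeff_trunc, Nat.pos_of_ne_zero hn, hF]
  -- with `D = F - P`: `(P + D)^k ≡ P^k + k P^(k-1) D` modulo `D^2`, and `X^(n+1) ∣ D^2`
  have hsq : X ^ (n + 1) ∣ (F - P) ^ 2 := by
    rw [hQ, mul_pow, ← pow_mul]
    exact dvd_mul_of_dvd_left (pow_dvd_pow X (by omega)) _
  have hcoeff := X_pow_dvd_iff.mp (hsq.trans (sq_dvd_add_pow_sub_sub (F - P) P k)) n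
    (Nat.lt_succ_self n)
  rw [add_sub_cancel, map_sub, map_sub, sub_eq_zero, sub_eq_iff_eq_add] at hcoeff
  rw [hcoeff, ← hQn, hQ,
    show P ^ (k - 1) * (X ^ n * Q) * (k : R⟦X⟧) = X ^ n * (P ^ (k - 1) * Q * (k : R⟦X⟧)) by
      ring,
    coeff_X_pow_mul', coeff_X_pow_mul']
  simp [hP₀, mul_comm]

section Ultrametric

variable {R : Type*} [NormedCommRing R] [IsUltrametricDist R]

theorem norm_coeff_mul_sub_le {F G : R⟦X⟧} {n : ℕ} {c : ℝ} (hc : 0 ≤ c)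
    (hF : ∀ i ≤ n, ‖coeff i F‖ ≤ 1) (hG₀ : constantCoeff G = 1)
    (hG : ∀ j, j ≠ 0 → ‖coeff j G‖ ≤ c) :
    ‖coeff n (F * G) - coeff n F‖ ≤ c := by
  have hG' : ∀ j, ‖coeff j (G - 1)‖ ≤ c := fun j => by
    rcases eq_or_ne j 0 with rfl | hj
    · simpa [hG₀] using hc
    · simpa [coeff_one, hj] using hG j hj
  rw [← mul_one (coeff n F), ← coeff_mul_C, map_one, ← map_sub, ← mul_sub, coeff_mul]
  refine IsUltrametricDist.norm_sum_le_of_forall_le_of_nonneg hc fun ij hij => ?_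
  have hi : ij.1 ≤ n := by have := Finset.HasAntidiagonal.mem_antidiagonal.mp hij; omega
  calc ‖coeff ij.1 F * coeff ij.2 (G - 1)‖ ≤ ‖coeff ij.1 F‖ * ‖coeff ij.2 (G - 1)‖ :=
        norm_mul_le _ _
    _ ≤ 1 * c := mul_le_mul (hF _ hi) (hG' _) (norm_nonneg _) zero_le_one
    _ = c := one_mul c

end Ultrametric

end PowerSeries

section Padic

variable {p : ℕ} [hp : Fact p.Prime]

theorem Padic.norm_pow_div_factorial_le {j : ℕ} (hj : j ≠ 0) :
    ‖(p : ℚ_[p]) ^ j / j.factorial‖ ≤ (p : ℝ)⁻¹ := by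
  have hv := padicValNat_factorial_lt_of_ne_zero p hj
  rw [norm_div, Padic.norm_p_pow,
    Padic.norm_eq_zpow_neg_valuation (by simp [Nat.factorial_ne_zero]), Padic.valuation_natCast,
    ← zpow_sub₀ (by exact_mod_cast hp.out.ne_zero), ← zpow_neg_one]
  exact zpow_le_zpow_right₀ (by exact_mod_cast hp.out.one_le) (by omega)

theorem PadicInt.norm_le_inv_of_toZMod_eq_zero {z : ℤ_[p]} (hz : PadicInt.toZMod z = 0) :
    ‖z‖ ≤ (p : ℝ)⁻¹ := by
  have hmem : z ∈ Ideal.span {(p : ℤ_[p])} := by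
    rw [← PadicInt.maximalIdeal_eq_span_p, ← PadicInt.ker_toZMod]
    exact hz
  obtain ⟨y, rfl⟩ := Ideal.mem_span_singleton'.mp hmem
  rw [norm_mul, PadicInt.norm_p]
  exact mul_le_of_le_one_left (by positivity) (PadicInt.norm_le_one y)

theorem Padic.norm_coeff_pow_sub_coeff_expand_le {P : Polynomial ℚ_[p]}
    (hP : ∀ i, ‖P.coeff i‖ ≤ 1) (n : ℕ) :
    ‖(P ^ p).coeff n - (Polynomial.expand ℚ_[p] p P).coeff n‖ ≤ (p : ℝ)⁻¹ := by
  obtain ⟨Pz, rfl⟩ : P ∈ Polynomial.lifts (PadicInt.Coe.ringHom (p := p)) :=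
    (Polynomial.lifts_iff_coeff_lifts _).mpr fun i => ⟨⟨_, hP i⟩, rfl⟩
  rw [Polynomial.coe_mapRingHom, ← Polynomial.map_pow, ← Polynomial.map_expand,
    Polynomial.coeff_map, Polynomial.coeff_map, ← map_sub, ← Polynomial.coeff_sub]
  refine PadicInt.norm_le_inv_of_toZMod_eq_zero ?_
  rw [← Polynomial.coeff_map, Polynomial.map_sub, Polynomial.map_pow, Polynomial.map_expand,
    ZMod.expand_card, sub_self, Polynomial.coeff_zero]

theorem Padic.norm_coeff_rescale_exp_le {j : ℕ} (hj : j ≠ 0) :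
    ‖coeff j (rescale (p : ℚ_[p]) (exp ℚ_[p]))‖ ≤ (p : ℝ)⁻¹ := by
  simpa [div_eq_mul_inv] using Padic.norm_pow_div_factorial_le (p := p) hj

theorem Padic.norm_coeff_le_one_of_pow_eq_expand_mul_exp {F : ℚ_[p]⟦X⟧}
    (hF₀ : constantCoeff F = 1)
    (hF : F ^ p = expand p hp.out.ne_zero F * rescale (p : ℚ_[p]) (exp ℚ_[p])) (n : ℕ) :
    ‖coeff n F‖ ≤ 1 := by
  induction n using Nat.strong_induction_on with
  | _ n ih =>
  rcases eq_or_ne n 0 with rfl | hn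
  · simp [hF₀]
  set P := trunc n F
  have hP : ∀ i, ‖P.coeff i‖ ≤ 1 := fun i => by
    rw [coeff_trunc]
    split_ifs with h
    exacts [ih i h, by simp]
  -- below degree `n + 1`, `F(X^p)` only sees coefficients of `F` of index `< n`
  have hlow : ∀ i ≤ n,
      coeff i (expand p hp.out.ne_zero F) = (Polynomial.expand _ p P).coeff i := by
    intro i hi
    rw [coeff_expand, Polynomial.coeff_expand hp.out.pos, coeff_trunc]
    split_ifs with hdvd hlt
    · rfl
    · exact absurd
        (Nat.div_lt_of_lt_mul (by nlinarith [hp.out.two_le, Nat.pos_of_ne_zero hn])) hlt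
    · rfl
  have hexpand : ∀ i ≤ n, ‖coeff i (expand p hp.out.ne_zero F)‖ ≤ 1 := fun i hi => by
    rw [hlow i hi, Polynomial.coeff_expand hp.out.pos]
    split_ifs
    exacts [hP _, by simp]
  have hmul := norm_coeff_mul_sub_le (G := rescale (p : ℚ_[p]) (exp ℚ_[p]))
    (inv_nonneg.mpr (Nat.cast_nonneg p)) hexpand
    (by rw [← coeff_zero_eq_constantCoeff_apply, coeff_rescale]; simp)
    fun j hj => Padic.norm_coeff_rescale_exp_le hj
  have hfrob := Padic.norm_coeff_pow_sub_coeff_expand_le hP n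
  have hkey : (p : ℚ_[p]) * coeff n F =
      (coeff n (expand p hp.out.ne_zero F * rescale (p : ℚ_[p]) (exp ℚ_[p])) -
        coeff n (expand p hp.out.ne_zero F)) -
      ((P ^ p).coeff n - (Polynomial.expand _ p P).coeff n) := by
    rw [← hF, coeff_pow_eq_coeff_trunc_pow_add hF₀ hn, hlow n le_rfl, ← Polynomial.coe_pow,
      Polynomial.coeff_coe]
    ring
  have hnorm : ‖(p : ℚ_[p]) * coeff n F‖ ≤ (p : ℝ)⁻¹ := by
    rw [hkey, sub_eq_add_neg]
    refine (IsUltrametricDist.norm_add_le_max _ _).trans ?_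
    rw [norm_neg]
    exact max_le hmul hfrob
  rw [norm_mul, Padic.norm_p] at hnorm
  exact le_of_mul_le_mul_left (by simpa using hnorm) (by simp [hp.out.pos])

end Padic

namespace ArtinHasse

variable (p : ℕ) [hp : Fact p.Prime]

noncomputable def log : ℚ_[p]⟦X⟧ :=
  mk fun n => if n ≠ 0 ∧ p ^ Nat.log p n = n then ((p : ℚ_[p]) ^ Nat.log p n)⁻¹ else 0

noncomputable def exp : ℚ_[p]⟦X⟧ :=
  (PowerSeries.exp ℚ_[p]).subst (log p)

variable {p}

theorem coeff_log_pow (k : ℕ) : coeff (p ^ k) (log p) = ((p : ℚ_[p]) ^ k)⁻¹ := by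
  simp [log, Nat.log_pow hp.out.one_lt, hp.out.ne_zero]

theorem coeff_log_of_forall_pow_ne {n : ℕ} (h : ∀ k, p ^ k ≠ n) : coeff n (log p) = 0 := by
  simp [log, h]

theorem constantCoeff_log : constantCoeff (log p) = 0 := by
  rw [← coeff_zero_eq_constantCoeff_apply]
  exact coeff_log_of_forall_pow_ne fun k => (pow_pos hp.out.pos k).ne'

theorem nsmul_log : p • log p = expand p hp.out.ne_zero (log p) + p • X := by
  ext n
  rw [map_add, map_nsmul, map_nsmul, coeff_expand, coeff_X, nsmul_eq_mul, nsmul_eq_mul]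
  by_cases hn : ∃ k, p ^ k = n
  · obtain ⟨k | k, rfl⟩ := hn
    · simp [hp.out.ne_one, by simpa using coeff_log_pow (p := p) 0]
    · have hdiv : p ^ (k + 1) / p = p ^ k := by
        rw [pow_succ', Nat.mul_div_cancel_left _ hp.out.pos]
      rw [coeff_log_pow, if_pos (dvd_pow_self p k.succ_ne_zero),
        if_neg (Nat.one_lt_pow k.succ_ne_zero hp.out.one_lt).ne', hdiv, coeff_log_pow, mul_zero,
        add_zero, pow_succ', mul_inv, ← mul_assoc,
        mul_inv_cancel₀ (by exact_mod_cast hp.out.ne_zero), one_mul]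
  · push Not at hn
    have h1 : n ≠ 1 := by simpa [eq_comm] using hn 0
    rw [coeff_log_of_forall_pow_ne hn, if_neg h1]
    split_ifs with hdvd
    · obtain ⟨m, rfl⟩ := hdvd
      rw [Nat.mul_div_cancel_left _ hp.out.pos,
        coeff_log_of_forall_pow_ne fun k hk => hn (k + 1) (by rw [pow_succ', hk])]
      simp
    · simp

theorem trunc_log : trunc p (log p) = Polynomial.X := by
  ext i
  rw [coeff_trunc, Polynomial.coeff_X]
  split_ifs with hi h1 h1
  · simpa [← h1] using coeff_log_pow (p := p) 0
  · refine coeff_log_of_forall_pow_ne fun k hk => ?_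
    rcases k with - | k
    · exact h1 (by simpa using hk)
    · exact absurd (hk ▸ Nat.le_self_pow k.succ_ne_zero p) (not_le.mpr hi)
  · exact absurd (h1 ▸ hp.out.one_lt) hi
  · rfl

theorem coeff_log_pow_of_lt {m : ℕ} (hm : m < p) (n : ℕ) :
    coeff m (log p ^ n) = coeff m (X ^ n : ℚ_[p]⟦X⟧) := by
  rw [← coeff_coe_trunc_of_lt hm, ← trunc_trunc_pow, trunc_log, Polynomial.coe_X,
    coeff_coe_trunc_of_lt hm]

theorem coeff_exp_of_lt {m : ℕ} (hm : m < p) :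
    coeff m (exp p) = (m.factorial : ℚ_[p])⁻¹ := by
  rw [exp, coeff_exp_subst constantCoeff_log, Finset.sum_eq_single_of_mem m (by simp)]
  · simp [coeff_log_pow_of_lt hm]
  · intro n _ hn
    simp [coeff_log_pow_of_lt hm, coeff_X_pow, Ne.symm hn]

theorem exp_pow : exp p ^ p =
    expand p hp.out.ne_zero (exp p) * rescale (p : ℚ_[p]) (PowerSeries.exp ℚ_[p]) := by
  rw [exp, ← exp_subst_nsmul constantCoeff_log, nsmul_log,
    exp_subst_add (by simp [constantCoeff_log]) (by simp), expand_exp_subst _ _ constantCoeff_log,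
    rescale_eq_subst, Nat.cast_smul_eq_nsmul]

theorem norm_coeff_exp_le_one (n : ℕ) : ‖coeff n (exp p)‖ ≤ 1 :=
  Padic.norm_coeff_le_one_of_pow_eq_expand_mul_exp (constantCoeff_exp_subst constantCoeff_log)
    exp_pow n

end ArtinHasse

theorem stmt_9_general (p : ℕ) [Fact p.Prime] (K : Type*) [NormedField K] [NormedAlgebra ℚ_[p] K]
    (hisom : ∀ x : ℚ_[p], ‖algebraMap ℚ_[p] K x‖ = ‖x‖)
    (γ : K) (hγ : ‖γ‖ = (p : ℝ) ^ (-(1 : ℝ) / (p - 1)))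
    -- the series `S(t) = Σ_{m≥0} t^{p^m}/p^m`
    (S : PowerSeries ℚ_[p])
    (hS : ∀ n : ℕ, (coeff (R := ℚ_[p]) n) S =
      if n ≠ 0 ∧ p ^ (Nat.log p n) = n then ((p : ℚ_[p]) ^ (Nat.log p n))⁻¹ else 0)
    -- the Artin–Hasse exponential `E = exp(S)`
    (E : PowerSeries ℚ_[p])
    (hE : ∀ m : ℕ, (coeff (R := ℚ_[p]) m) E =
      ∑ n ∈ Finset.range (m + 1), (coeff (R := ℚ_[p]) m) (S ^ n) / (Nat.factorial n : ℚ_[p]))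
    -- the coefficients `γ_m` of `θ(t) = E(γ t)`
    (g : ℕ → K) (hg : ∀ m : ℕ, g m = algebraMap ℚ_[p] K ((coeff (R := ℚ_[p]) m) E) * γ ^ m) :
    (∀ m : ℕ, ‖g m‖ ≤ (p : ℝ) ^ (-(m : ℝ) / (p - 1))) ∧
    ∀ m : ℕ, m ≤ p - 1 → g m = γ ^ m / (Nat.factorial m : K) := by
  obtain rfl : S = ArtinHasse.log p := ext fun n => by rw [hS, ArtinHasse.log, coeff_mk]
  obtain rfl : E = ArtinHasse.exp p :=
    ext fun m => by rw [hE, ArtinHasse.exp, coeff_exp_subst ArtinHasse.constantCoeff_log]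
  refine ⟨fun m => ?_, fun m hm => ?_⟩
  · have hγm : ‖γ‖ ^ m = (p : ℝ) ^ (-(m : ℝ) / (p - 1)) := by
      rw [hγ, ← Real.rpow_natCast, ← Real.rpow_mul (Nat.cast_nonneg p)]
      ring_nf
    rw [hg, norm_mul, hisom, norm_pow, hγm]
    exact mul_le_of_le_one_left (by positivity) (ArtinHasse.norm_coeff_exp_le_one m)
  · have hmp : m < p := by have := (Fact.out : p.Prime).pos; omega
    rw [hg, ArtinHasse.coeff_exp_of_lt hmp, map_inv₀, map_natCast, div_eq_inv_mul]

/-- Dwork's splitting function: let `γ` with `v(γ) = 1/(p-1)` be a root of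
`Σ_{m≥0} γ^{p^m}/p^m = 0`, and let `θ(t) = E(γt) = Σ γ_m t^m` where
`E(t) = exp(Σ_{m≥0} t^{p^m}/p^m)` is the Artin–Hasse exponential. Then
`v(γ_m) ≥ m/(p-1)` and `γ_m = γ^m/m!` for `0 ≤ m ≤ p-1`. Valuations `v`
(normalized by `v(p)=1`) are expressed via norms: `v(x) ≥ c ↔ ‖x‖ ≤ p^{-c}`. -/
theorem stmt_9 (p : ℕ) [Fact p.Prime] (K : Type*) [NormedField K] [CompleteSpace K]
    [IsUltrametricDist K] [NormedAlgebra ℚ_[p] K]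
    (hisom : ∀ x : ℚ_[p], ‖algebraMap ℚ_[p] K x‖ = ‖x‖)
    (γ : K) (hγ : ‖γ‖ = (p : ℝ) ^ (-(1 : ℝ) / (p - 1)))
    (hroot : HasSum (fun m : ℕ => γ ^ (p ^ m) / (p : K) ^ m) 0)
    -- the series `S(t) = Σ_{m≥0} t^{p^m}/p^m`
    (S : PowerSeries ℚ_[p])
    (hS : ∀ n : ℕ, (coeff (R := ℚ_[p]) n) S =
      if n ≠ 0 ∧ p ^ (Nat.log p n) = n then ((p : ℚ_[p]) ^ (Nat.log p n))⁻¹ else 0)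
    -- the Artin–Hasse exponential `E = exp(S)`
    (E : PowerSeries ℚ_[p])
    (hE : ∀ m : ℕ, (coeff (R := ℚ_[p]) m) E =
      ∑ n ∈ Finset.range (m + 1), (coeff (R := ℚ_[p]) m) (S ^ n) / (Nat.factorial n : ℚ_[p]))
    -- the coefficients `γ_m` of `θ(t) = E(γ t)`
    (g : ℕ → K) (hg : ∀ m : ℕ, g m = algebraMap ℚ_[p] K ((coeff (R := ℚ_[p]) m) E) * γ ^ m) :
    (∀ m : ℕ, ‖g m‖ ≤ (p : ℝ) ^ (-(m : ℝ) / (p - 1))) ∧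
    ∀ m : ℕ, m ≤ p - 1 → g m = γ ^ m / (Nat.factorial m : K) :=
  stmt_9_general p K hisom γ hγ S hS E hE g hg
end

section
/- Let p = dk - 1 be prime with p ∤ d, and F_i as above (coefficients of θ(x^d)θ(ax^{d-1}) with a a unit). For integers 1 ≤ i ≤ d-1, 0 ≤ j ≤ d-1 with i + j ≥ d, one has v(F_{pi-j}) = (ki - 1)/(p - 1); in particular v(F_{pi-(d-i)}) = (ki-1)/(p-1) and F_{pi-(d-i)} = γ^{ki-1}(1 + O(γ))/(ki-1)! where O(γ) denotes an element of valuation ≥ 1/(p-1). -/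
/-!
Write `F_N = ∑ γ_m γ_n aⁿ` over `d m + (d - 1) n = N`. Since `d (m + n) = N + n`, the admissible
`n` form one residue class mod `d`, and `m + n` grows with `n`; so the pair with `n < d` is the
unique pair minimising `m + n`. When `m + n < p`, its term `γ^{m+n} aⁿ / (m! n!)` has valuation
exactly `(m + n)/(p - 1)` (the factorials are units), and every other term has valuation at least
`(m + n + 1)/(p - 1)`; by the ultrametric inequality it dominates `F_N`. For `N = p i - j` the
minimal pair has `n = i + j - d` and `m + n = k i - 1`, and for `j = d - i` it is `(k i - 1, 0)`.
-/

open Finset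
open scoped Nat

section Ultrametric

variable {K : Type*} [NormedField K] [IsUltrametricDist K]

lemma norm_natCast_eq_one_of_not_dvd {p c : ℕ} (hp : p.Prime) (hpK : ‖(p : K)‖ < 1)
    (hc : ¬ p ∣ c) : ‖(c : K)‖ = 1 := by
  refine le_antisymm (IsUltrametricDist.norm_natCast_le_one K c) (not_lt.mp fun hlt => ?_)
  have hbezout : (1 : K) = p * (Nat.gcdA p c : K) + c * (Nat.gcdB p c : K) := by
    have := Nat.gcd_eq_gcd_ab p c
    rw [((Nat.Prime.coprime_iff_not_dvd hp).mpr hc).gcd_eq_one] at this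
    simpa using congrArg (Int.cast : ℤ → K) this
  have hsmall : ∀ x : K, ‖x‖ < 1 → ∀ z : ℤ, ‖x * z‖ < 1 := fun x hx z => by
    rw [norm_mul]
    exact lt_of_le_of_lt (mul_le_of_le_one_right (norm_nonneg x)
      (IsUltrametricDist.norm_intCast_le_one K z)) hx
  have := IsUltrametricDist.norm_add_le_max (p * (Nat.gcdA p c : K)) (c * (Nat.gcdB p c : K))
  rw [← hbezout, norm_one] at this
  exact this.not_gt (max_lt (hsmall _ hpK _) (hsmall _ hlt _))

lemma norm_factorial_eq_one {p n : ℕ} (hp : p.Prime) (hpK : ‖(p : K)‖ < 1) (hn : n < p) :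
    ‖(n ! : K)‖ = 1 :=
  norm_natCast_eq_one_of_not_dvd hp hpK fun h => hn.not_ge (hp.dvd_factorial.mp h)

lemma exists_sum_eq_add_of_norm_le {ι : Type*} [DecidableEq ι] {s : Finset ι} {f : ι → K}
    {i₀ : ι} (hi₀ : i₀ ∈ s) {r : ℝ} (hr : 0 ≤ r) (h : ∀ i ∈ s, i ≠ i₀ → ‖f i‖ ≤ r) :
    ∃ R : K, ‖R‖ ≤ r ∧ ∑ i ∈ s, f i = f i₀ + R :=
  ⟨_, IsUltrametricDist.norm_sum_le_of_forall_le_of_nonneg hr fun i hi =>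
      h i (mem_of_mem_erase hi) (ne_of_mem_erase hi),
    (add_sum_erase s f hi₀).symm⟩

lemma norm_add_eq_left_of_norm_lt {x y : K} (h : ‖y‖ < ‖x‖) : ‖x + y‖ = ‖x‖ := by
  rw [IsUltrametricDist.norm_add_eq_max_of_norm_ne_norm h.ne', max_eq_left h.le]

end Ultrametric

lemma exists_add_eq_mul_one_add_div {K : Type*} [NormedField K] {γ c R : K} {M : ℕ}
    (hγ : γ ≠ 0) (hc : ‖c‖ = 1) (hR : ‖R‖ ≤ ‖γ‖ ^ (M + 1)) :
    ∃ ε : K, ‖ε‖ ≤ ‖γ‖ ∧ γ ^ M / c + R = γ ^ M * (1 + ε) / c := by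
  have hc0 : c ≠ 0 := norm_ne_zero_iff.mp (by rw [hc]; exact one_ne_zero)
  refine ⟨R * c / γ ^ M, ?_, by field_simp⟩
  rw [norm_div, norm_mul, hc, mul_one, norm_pow, div_le_iff₀ (by positivity), ← pow_succ']
  exact hR

lemma add_lt_add_of_weighted_eq {d m n m₀ n₀ : ℕ} (hn₀ : n₀ < d)
    (h : d * m + (d - 1) * n = d * m₀ + (d - 1) * n₀) (hne : (m, n) ≠ (m₀, n₀)) :
    m₀ + n₀ < m + n := by
  -- `d m + (d - 1) n = d (m + n) - n`
  have key : (n : ℤ) - n₀ = d * ((m + n : ℤ) - (m₀ + n₀)) := by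
    zify [show 1 ≤ d by omega] at h
    linear_combination -h
  by_contra! hle
  rcases hle.lt_or_eq with hlt | heq
  · have : (d : ℤ) * ((m + n : ℤ) - (m₀ + n₀)) ≤ -d := by
      have : ((m + n : ℕ) : ℤ) < m₀ + n₀ := by exact_mod_cast hlt
      push_cast at this
      nlinarith
    omega
  · have hn : n = n₀ := by
      have : ((m + n : ℕ) : ℤ) = m₀ + n₀ := by exact_mod_cast heq
      push_cast at this
      rw [this, sub_self, mul_zero] at key
      omega
    exact hne (Prod.ext (by simp only; omega) hn)

lemma weightedDegree_eq_prime_mul_sub {p d k i j n₀ : ℕ} (hpdk : p = d * k - 1) (hk : 1 ≤ k)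
    (hi : 1 ≤ i) (hn₀ : i + j = n₀ + d) (hn₀i : n₀ < i) :
    d * (k * i - 1 - n₀) + (d - 1) * n₀ = p * i - j := by
  have hz : (i : ℤ) + j = n₀ + d := by exact_mod_cast hn₀
  subst hpdk
  have hdk : 1 ≤ d * k := by nlinarith
  have hik : i ≤ k * i := by nlinarith
  have hpi : j ≤ (d * k - 1) * i := by
    zify [hdk]
    nlinarith
  zify [hdk, hpi, show n₀ ≤ k * i - 1 by omega, show 1 ≤ k * i by omega, show 1 ≤ d by omega]
  linear_combination hz

section Coefficients

variable {K : Type*} [NormedField K] [IsUltrametricDist K]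

def thetaProdCoeff (d : ℕ) (g : ℕ → K) (a : K) (N : ℕ) : K :=
  ∑ mn ∈ (range (N + 1) ×ˢ range (N + 1)).filter (fun mn => d * mn.1 + (d - 1) * mn.2 = N),
    g mn.1 * g mn.2 * a ^ mn.2

lemma thetaProdCoeff_eq_add {d N m₀ n₀ : ℕ} {g : ℕ → K} {a : K} {r : ℝ} (hr₀ : 0 ≤ r)
    (hr₁ : r ≤ 1) (hg : ∀ m, ‖g m‖ ≤ r ^ m) (ha : ‖a‖ ≤ 1)
    (hN : d * m₀ + (d - 1) * n₀ = N) (hn₀ : n₀ < d) :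
    ∃ R : K, ‖R‖ ≤ r ^ (m₀ + n₀ + 1) ∧ thetaProdCoeff d g a N = g m₀ * g n₀ * a ^ n₀ + R := by
  have hmem : (m₀, n₀) ∈ (range (N + 1) ×ˢ range (N + 1)).filter
      (fun mn => d * mn.1 + (d - 1) * mn.2 = N) := by
    have hm : m₀ ≤ d * m₀ := Nat.le_mul_of_pos_left _ (by omega)
    have hn : n₀ ≤ (d - 1) * n₀ := by
      rcases Nat.eq_zero_or_pos n₀ with h | h
      · simp [h]
      · exact Nat.le_mul_of_pos_left _ (by omega)
    simp only [mem_filter, mem_product, mem_range]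
    exact ⟨⟨by omega, by omega⟩, hN⟩
  refine exists_sum_eq_add_of_norm_le hmem (by positivity) fun ⟨m, n⟩ hmn hne => ?_
  have hlt := add_lt_add_of_weighted_eq hn₀ ((mem_filter.mp hmn).2.trans hN.symm) hne
  calc ‖g m * g n * a ^ n‖ ≤ r ^ m * r ^ n * 1 := by
        rw [norm_mul, norm_mul, norm_pow]
        gcongr
        · exact hg m
        · exact hg n
        · exact pow_le_one₀ (norm_nonneg a) ha
    _ ≤ r ^ (m₀ + n₀ + 1) := by
        rw [mul_one, ← pow_add]
        exact pow_le_pow_of_le_one hr₀ hr₁ hlt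

lemma thetaProdCoeff_eq_leading {p d N m₀ n₀ : ℕ} (hp : p.Prime) (hpK : ‖(p : K)‖ < 1)
    {γ : K} (hγ₀ : 0 < ‖γ‖) (hγ₁ : ‖γ‖ < 1) {g : ℕ → K} (hg : ∀ m, ‖g m‖ ≤ ‖γ‖ ^ m)
    (hglow : ∀ m, m ≤ p - 1 → g m = γ ^ m / (m ! : K)) {a : K} (ha : ‖a‖ = 1)
    (hN : d * m₀ + (d - 1) * n₀ = N) (hn₀ : n₀ < d) (hp₀ : m₀ + n₀ < p) :
    ‖thetaProdCoeff d g a N‖ = ‖γ‖ ^ (m₀ + n₀) ∧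
    ∃ R : K, ‖R‖ ≤ ‖γ‖ ^ (m₀ + n₀ + 1) ∧
      thetaProdCoeff d g a N = γ ^ (m₀ + n₀) / ((m₀ ! : K) * (n₀ ! : K)) * a ^ n₀ + R := by
  obtain ⟨R, hR, hF⟩ := thetaProdCoeff_eq_add hγ₀.le hγ₁.le hg ha.le hN hn₀
  have hlead : g m₀ * g n₀ * a ^ n₀ = γ ^ (m₀ + n₀) / ((m₀ ! : K) * (n₀ ! : K)) * a ^ n₀ := by
    rw [hglow m₀ (by omega), hglow n₀ (by omega)]
    ring
  have hnorm : ‖g m₀ * g n₀ * a ^ n₀‖ = ‖γ‖ ^ (m₀ + n₀) := by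
    rw [hlead, norm_mul, norm_div, norm_mul, norm_factorial_eq_one hp hpK (by omega),
      norm_factorial_eq_one hp hpK (by omega), norm_pow, norm_pow, ha]
    simp
  have hdom : ‖R‖ < ‖g m₀ * g n₀ * a ^ n₀‖ :=
    hnorm ▸ hR.trans_lt (pow_lt_pow_right_of_lt_one₀ hγ₀ hγ₁ (Nat.lt_succ_self _))
  exact ⟨by rw [hF, norm_add_eq_left_of_norm_lt hdom, hnorm], R, hR, hlead ▸ hF⟩

end Coefficients

theorem stmt_11_general (p d k : ℕ) (hp : p.Prime) (hk : 1 ≤ k)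
    (hpdk : p = d * k - 1)
    (K : Type*) [NormedField K] [IsUltrametricDist K]
    (hpnorm : ‖(p : K)‖ = (p : ℝ)⁻¹)
    (γ : K) (hγ : ‖γ‖ = (p : ℝ) ^ (-(1 : ℝ) / (p - 1)))
    (g : ℕ → K) (hg : ∀ m : ℕ, ‖g m‖ ≤ (p : ℝ) ^ (-(m : ℝ) / (p - 1)))
    (hglow : ∀ m : ℕ, m ≤ p - 1 → g m = γ ^ m / (Nat.factorial m : K))
    (a : K) (ha : ‖a‖ = 1)
    (F : ℕ → K)
    (hF : ∀ i : ℕ, F i =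
      ∑ mn ∈ (Finset.range (i + 1) ×ˢ Finset.range (i + 1)).filter
          (fun mn => d * mn.1 + (d - 1) * mn.2 = i),
        g mn.1 * g mn.2 * a ^ mn.2) :
    ∀ i j : ℕ, 1 ≤ i → i ≤ d - 1 → j ≤ d - 1 → d ≤ i + j →
      ‖F (p * i - j)‖ = (p : ℝ) ^ (-((k * i - 1 : ℕ) : ℝ) / (p - 1)) ∧
      ∃ ε : K, ‖ε‖ ≤ (p : ℝ) ^ (-(1 : ℝ) / (p - 1)) ∧
        F (p * i - (d - i)) = γ ^ (k * i - 1) * (1 + ε) / (Nat.factorial (k * i - 1) : K) := by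
  intro i j hi hid hj hij
  have hp₁ : (1 : ℝ) < p := by exact_mod_cast hp.one_lt
  have hpK : ‖(p : K)‖ < 1 := hpnorm ▸ inv_lt_one_of_one_lt₀ hp₁
  have hγ₀ : 0 < ‖γ‖ := by rw [hγ]; positivity
  have hγ₁ : ‖γ‖ < 1 := hγ ▸ Real.rpow_lt_one_of_one_lt_of_neg hp₁
    (div_neg_of_neg_of_pos (by norm_num) (by linarith))
  have hrpow (m : ℕ) : (p : ℝ) ^ (-(m : ℝ) / (p - 1)) = ‖γ‖ ^ m := by
    rw [hγ, ← Real.rpow_natCast, ← Real.rpow_mul (by positivity)]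
    ring_nf
  have hg' (m : ℕ) : ‖g m‖ ≤ ‖γ‖ ^ m := hrpow m ▸ hg m
  have hFθ : F = thetaProdCoeff d g a := funext hF
  have hik : i ≤ k * i := Nat.le_mul_of_pos_left i hk
  have hkp : k * i ≤ p := by
    have := Nat.mul_le_mul_left k hid
    rw [Nat.mul_sub_one, mul_comm k d] at this
    omega
  obtain ⟨n₀, hn₀⟩ : ∃ n₀, i + j = n₀ + d := ⟨i + j - d, by omega⟩
  obtain ⟨hnorm, -⟩ := thetaProdCoeff_eq_leading hp hpK hγ₀ hγ₁ hg' hglow ha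
    (weightedDegree_eq_prime_mul_sub hpdk hk hi hn₀ (by omega)) (by omega) (by omega)
  obtain ⟨-, R, hR, hlead⟩ := thetaProdCoeff_eq_leading (n₀ := 0) hp hpK hγ₀ hγ₁ hg' hglow ha
    (weightedDegree_eq_prime_mul_sub (j := d - i) hpdk hk hi (by omega) (by omega))
    (by omega) (by omega)
  rw [show k * i - 1 - n₀ + n₀ = k * i - 1 by omega] at hnorm
  simp only [Nat.sub_zero, Nat.add_zero, Nat.factorial_zero, Nat.cast_one, mul_one, pow_zero]
    at hR hlead
  obtain ⟨ε, hε, hεeq⟩ := exists_add_eq_mul_one_add_div (norm_pos_iff.mp hγ₀)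
    (norm_factorial_eq_one (n := k * i - 1) hp hpK (by omega)) hR
  exact ⟨by rw [hFθ, hnorm, hrpow], ε, hε.trans_eq hγ, by rw [hFθ, hlead, hεeq]⟩

/-- For `p = dk - 1` prime and `i + j ≥ d` (with `1 ≤ i ≤ d-1`, `0 ≤ j ≤ d-1`), one has
`v(F_{pi-j}) = (ki-1)/(p-1)`, and `F_{pi-(d-i)} = γ^{ki-1}(1+O(γ))/(ki-1)!` where
`O(γ)` has valuation `≥ 1/(p-1)`. Valuations are expressed via norms. -/
theorem stmt_11 (p d k : ℕ) (hp : p.Prime) (hd : 2 ≤ d) (hk : 1 ≤ k)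
    (hpdk : p = d * k - 1) (hpd : ¬ p ∣ d)
    (K : Type*) [NormedField K] [IsUltrametricDist K] [CharZero K]
    (hpnorm : ‖(p : K)‖ = (p : ℝ)⁻¹)
    (γ : K) (hγ : ‖γ‖ = (p : ℝ) ^ (-(1 : ℝ) / (p - 1)))
    (g : ℕ → K) (hg : ∀ m : ℕ, ‖g m‖ ≤ (p : ℝ) ^ (-(m : ℝ) / (p - 1)))
    (hglow : ∀ m : ℕ, m ≤ p - 1 → g m = γ ^ m / (Nat.factorial m : K))
    (a : K) (ha : ‖a‖ = 1)
    (F : ℕ → K)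
    (hF : ∀ i : ℕ, F i =
      ∑ mn ∈ (Finset.range (i + 1) ×ˢ Finset.range (i + 1)).filter
          (fun mn => d * mn.1 + (d - 1) * mn.2 = i),
        g mn.1 * g mn.2 * a ^ mn.2) :
    ∀ i j : ℕ, 1 ≤ i → i ≤ d - 1 → j ≤ d - 1 → d ≤ i + j →
      ‖F (p * i - j)‖ = (p : ℝ) ^ (-((k * i - 1 : ℕ) : ℝ) / (p - 1)) ∧
      ∃ ε : K, ‖ε‖ ≤ (p : ℝ) ^ (-(1 : ℝ) / (p - 1)) ∧
        F (p * i - (d - i)) = γ ^ (k * i - 1) * (1 + ε) / (Nat.factorial (k * i - 1) : K) :=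
  stmt_11_general p d k hp hk hpdk K hpnorm γ hγ g hg hglow a ha F hF
end

section
/- With w_i defined as above (p = dk - 1 prime, d ≥ 2), for every 0 ≤ s ≤ d - 1: Σ_{i=0}^{s} w_i = s(s+1)/(2d) + s(s+1)/(d(p-1)) if s ≤ (d-1)/2, and Σ_{i=0}^{s} w_i = s(s+1)/(2d) + (d-s)(d-s-1)/(d(p-1)) if s ≥ d/2. In both cases Σ_{i=0}^{s} w_i ≤ s(s+1)/(2d) + (d²-1)/(4d(p-1)). -/
/-!
Split off the part of `w_i` that does not depend on `p`: in every case
`w_i = i/d + δ_i/(d(p-1))` with `δ_i = 2i`, `0`, `2i - 2d` for `2i < d`, `2i = d`, `2i > d`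
(`excess d i`). The first parts sum to `s(s+1)/(2d)`, and the partial sums of `δ` telescope to
`t(t+1)` with `t = min(s, d-1-s)` (`excessSum d s`). Since `2t + 1 ≤ d`, this is at most
`(d² - 1)/4`.
-/

open Finset

namespace Weight

def weight (x : ℚ) (d i : ℕ) : ℚ :=
  if 2 * i < d then (x + 1) * i / (d * (x - 1))
  else if 2 * i = d then 1 / 2
  else ((x + 1) * i - 2 * d) / (d * (x - 1))

def excess (d i : ℕ) : ℚ :=
  if 2 * i < d then 2 * i else if 2 * i = d then 0 else 2 * i - 2 * d

def excessSum (d s : ℕ) : ℚ :=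
  if 2 * s < d then s * (s + 1) else (d - s) * (d - s - 1)

variable {x : ℚ} {d : ℕ}

theorem weight_eq (hx : x ≠ 1) (hd : d ≠ 0) (i : ℕ) :
    weight x d i = i / d + excess d i / (d * (x - 1)) := by
  have hx' : x - 1 ≠ 0 := sub_ne_zero.mpr hx
  have hd' : (d : ℚ) ≠ 0 := Nat.cast_ne_zero.mpr hd
  unfold weight excess
  split_ifs with hlt heq
  · field_simp; ring
  · have : (d : ℚ) = 2 * i := by exact_mod_cast heq.symm
    field_simp; rw [this]; ring
  · field_simp; ring

theorem excess_succ (s : ℕ) : excess d (s + 1) = excessSum d (s + 1) - excessSum d s := by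
  unfold excess excessSum
  by_cases h : 2 * (s + 1) < d
  · rw [if_pos h, if_pos h, if_pos (by omega)]; push_cast; ring
  by_cases hs : 2 * s < d
  · obtain rfl | rfl : d = 2 * s + 1 ∨ d = 2 * s + 2 := by omega
    · rw [if_neg h, if_neg (by omega), if_neg h, if_pos hs]; push_cast; ring
    · rw [if_neg h, if_pos (by ring), if_neg h, if_pos hs]; push_cast; ring
  · rw [if_neg h, if_neg (by omega), if_neg h, if_neg hs]; push_cast; ring

theorem sum_range_excess (hd : 0 < d) (s : ℕ) :
    ∑ i ∈ range (s + 1), excess d i = excessSum d s := by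
  induction s with
  | zero => simp [excess, excessSum, hd]
  | succ s ih => rw [sum_range_succ, ih, excess_succ]; ring

theorem sum_range_weight (hx : x ≠ 1) (hd : 0 < d) (s : ℕ) :
    ∑ i ∈ range (s + 1), weight x d i = s * (s + 1) / (2 * d) + excessSum d s / (d * (x - 1)) := by
  have hd' : (d : ℚ) ≠ 0 := by positivity
  have gauss : ∑ i ∈ range (s + 1), (i : ℚ) = s * (s + 1) / 2 := by
    induction s with
    | zero => simp
    | succ s ih => rw [sum_range_succ, ih]; push_cast; ring
  simp only [weight_eq hx hd.ne', sum_add_distrib, ← sum_div, sum_range_excess hd, gauss]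
  field_simp

theorem four_mul_excessSum_le {s : ℕ} (hs : s < d) : 4 * excessSum d s ≤ (d : ℚ) ^ 2 - 1 := by
  unfold excessSum
  split_ifs with h
  · have : ((2 * s + 1 : ℕ) : ℚ) ^ 2 ≤ (d : ℚ) ^ 2 := by gcongr; exact_mod_cast h
    push_cast at this; linarith
  · have : ((2 * (d - s - 1) + 1 : ℕ) : ℚ) ^ 2 ≤ (d : ℚ) ^ 2 := by gcongr; omega
    push_cast [Nat.sub_sub, Nat.cast_sub (show s + 1 ≤ d by omega)] at this; linarith

end Weight

open Weight in
theorem stmt_13_general (p d : ℕ) (hp : p.Prime) (hd : 2 ≤ d) (w : ℕ → ℚ)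
    (hw : ∀ i : ℕ, w i =
      if 2 * i < d then ((p : ℚ) + 1) * i / (d * ((p : ℚ) - 1))
      else if 2 * i = d then 1 / 2
      else (((p : ℚ) + 1) * i - 2 * d) / (d * ((p : ℚ) - 1))) :
    ∀ s : ℕ, s ≤ d - 1 →
      (2 * s ≤ d - 1 →
        ∑ i ∈ Finset.range (s + 1), w i =
          (s : ℚ) * (s + 1) / (2 * d) + (s : ℚ) * (s + 1) / (d * ((p : ℚ) - 1))) ∧
      (d ≤ 2 * s →
        ∑ i ∈ Finset.range (s + 1), w i =
          (s : ℚ) * (s + 1) / (2 * d) +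
            ((d : ℚ) - s) * ((d : ℚ) - s - 1) / (d * ((p : ℚ) - 1))) ∧
      ∑ i ∈ Finset.range (s + 1), w i ≤
        (s : ℚ) * (s + 1) / (2 * d) + ((d : ℚ) ^ 2 - 1) / (4 * d * ((p : ℚ) - 1)) := by
  intro s hs
  have hp1 : (1 : ℚ) < p := by exact_mod_cast hp.one_lt
  have hd0 : 0 < d := by omega
  obtain rfl : w = weight p d := funext hw
  rw [sum_range_weight hp1.ne' hd0]
  refine ⟨fun h => by rw [excessSum, if_pos (by omega)],
    fun h => by rw [excessSum, if_neg (by omega)], ?_⟩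
  have hpos : (0 : ℚ) < d * (p - 1) := mul_pos (by positivity) (by linarith)
  have hle : excessSum d s / (d * (p - 1)) ≤ ((d : ℚ) ^ 2 - 1) / (4 * d * (p - 1)) := by
    rw [div_le_div_iff₀ hpos (by linarith)]
    nlinarith [four_mul_excessSum_le (show s < d by omega)]
  linarith

theorem stmt_13 (p d k : ℕ) (hp : p.Prime) (hd : 2 ≤ d) (hk : 1 ≤ k)
    (hpdk : p = d * k - 1) (w : ℕ → ℚ)
    (hw : ∀ i : ℕ, w i =
      if 2 * i < d then ((p : ℚ) + 1) * i / (d * ((p : ℚ) - 1))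
      else if 2 * i = d then 1 / 2
      else (((p : ℚ) + 1) * i - 2 * d) / (d * ((p : ℚ) - 1))) :
    ∀ s : ℕ, s ≤ d - 1 →
      (2 * s ≤ d - 1 →
        ∑ i ∈ Finset.range (s + 1), w i =
          (s : ℚ) * (s + 1) / (2 * d) + (s : ℚ) * (s + 1) / (d * ((p : ℚ) - 1))) ∧
      (d ≤ 2 * s →
        ∑ i ∈ Finset.range (s + 1), w i =
          (s : ℚ) * (s + 1) / (2 * d) +
            ((d : ℚ) - s) * ((d : ℚ) - s - 1) / (d * ((p : ℚ) - 1))) ∧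
      ∑ i ∈ Finset.range (s + 1), w i ≤
        (s : ℚ) * (s + 1) / (2 * d) + ((d : ℚ) ^ 2 - 1) / (4 * d * ((p : ℚ) - 1)) :=
  stmt_13_general p d hp hd w hw
end

section
/- Let NP(f, x) and HP(f, x) be piecewise linear convex functions on [0, ∞) such that NP(f, x) ≥ HP(f, x) for all x, HP has vertices (n, n(n-1)/(2d)) for n = 0, 1, 2, …, the slopes of NP on successive unit intervals are {i + w_j : i ≥ 0, 0 ≤ j ≤ d-1} in increasing order, and Σ_{j=0}^{d-1} w_j = Σ_{j=0}^{d-1} j/d with 0 ≤ w_0 < ⋯ < w_{d-1} < 1. Then NP(f, x) - HP(f, x) is periodic with period d, and its maximum is attained at some integer point 0 ≤ x ≤ d. -/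
/-!
Both `NP` and `HP` interpolate their values at the integers linearly, so `NP - HP` is the
linear interpolation of `D n = N n - H n = ∑_{m < n} (slope m - m / d)`. Since
`slope (m + d) = slope m + 1`, the summand is `d`-periodic, and `∑ w_j = ∑ j / d` says that it
sums to zero over one period; hence `D` is `d`-periodic. A linear interpolation attains its
supremum on `[0, ∞)` at a node, which by periodicity can be taken in `[0, d)`.
-/

open Finset Function

section NatInterp

variable {K : Type*} [Field K] [LinearOrder K] [IsStrictOrderedRing K] [FloorSemiring K]

def natInterp (a : ℕ → K) (x : K) : K :=
  a ⌊x⌋₊ + (x - ⌊x⌋₊) * (a (⌊x⌋₊ + 1) - a ⌊x⌋₊)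

@[simp]
theorem natInterp_natCast (a : ℕ → K) (n : ℕ) : natInterp a n = a n := by
  simp [natInterp]

theorem natInterp_add_period {a : ℕ → K} {d : ℕ} (ha : Periodic a d) {x : K} (hx : 0 ≤ x) :
    natInterp a (x + d) = natInterp a x := by
  simp only [natInterp, Nat.floor_add_natCast hx, Nat.cast_add, add_right_comm _ d 1, ha _]
  ring

theorem natInterp_le {a : ℕ → K} {M : K} (ha : ∀ n, a n ≤ M) {x : K} (hx : 0 ≤ x) :
    natInterp a x ≤ M := by
  have ht₀ : 0 ≤ x - ⌊x⌋₊ := sub_nonneg.mpr (Nat.floor_le hx)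
  have ht₁ : x - ⌊x⌋₊ ≤ 1 := by linarith [Nat.lt_floor_add_one x]
  calc natInterp a x = (1 - (x - ⌊x⌋₊)) * a ⌊x⌋₊ + (x - ⌊x⌋₊) * a (⌊x⌋₊ + 1) := by
        rw [natInterp]; ring
    _ ≤ (1 - (x - ⌊x⌋₊)) * M + (x - ⌊x⌋₊) * M := by
        gcongr <;> exact ha _
    _ = M := by ring

end NatInterp

theorem natInterp_eq_intFloor {K : Type*} [Field K] [LinearOrder K] [IsStrictOrderedRing K]
    [FloorRing K] (a : ℕ → K) {x : K} (hx : 0 ≤ x) :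
    natInterp a x = a ⌊x⌋.toNat + (x - ⌊x⌋) * (a (⌊x⌋.toNat + 1) - a ⌊x⌋.toNat) := by
  rw [natInterp, Int.floor_toNat, natCast_floor_eq_intCast_floor hx]

theorem Function.Periodic.exists_lt_forall_le_nat {α : Type*} [LinearOrder α] {a : ℕ → α}
    {d : ℕ} (ha : Periodic a d) (hd : 0 < d) : ∃ n₀ < d, ∀ n, a n ≤ a n₀ := by
  obtain ⟨n₀, hn₀, hmax⟩ := (range d).exists_max_image a (nonempty_range_iff.mpr hd.ne')
  refine ⟨n₀, mem_range.mp hn₀, fun n => ?_⟩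
  rw [← ha.map_mod_nat n]
  exact hmax _ (mem_range.mpr (Nat.mod_lt n hd))

theorem Function.Periodic.sum_range {M : Type*} [AddCommMonoid M] {g : ℕ → M} {d : ℕ}
    (hg : Periodic g d) (h : ∑ m ∈ range d, g m = 0) :
    Periodic (fun n => ∑ m ∈ range n, g m) d := by
  intro n
  induction n with
  | zero => simpa using h
  | succ n ih => simp only [add_right_comm n 1 d, sum_range_succ, ih, hg n]

section Slopes

variable {K : Type*} [Field K] [CharZero K]

theorem sum_range_natCast_div (n d : ℕ) :
    ∑ m ∈ range n, (m : K) / d = n * (n - 1) / (2 * d) := by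
  rw [← sum_div, ← div_div]
  congr 1
  induction n with
  | zero => simp
  | succ n ih => rw [sum_range_succ, ih]; push_cast; ring

theorem periodic_div_add_mod_sub_div (w : ℕ → K) {d : ℕ} (hd : d ≠ 0) :
    Periodic (fun n : ℕ => ((n / d : ℕ) : K) + w (n % d) - n / d) d := by
  intro n
  have hd' : (d : K) ≠ 0 := Nat.cast_ne_zero.mpr hd
  simp only [Nat.add_div_right n (Nat.pos_of_ne_zero hd), Nat.add_mod_right, Nat.cast_add,
    Nat.cast_one, add_div, div_self hd']
  ring

end Slopes

theorem sum_range_div_add_mod_sub_div {K : Type*} [Field K] (w : ℕ → K) (d : ℕ) :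
    ∑ n ∈ range d, (((n / d : ℕ) : K) + w (n % d) - n / d) =
      ∑ j ∈ range d, w j - ∑ j ∈ range d, (j : K) / d := by
  rw [← sum_sub_distrib]
  refine sum_congr rfl fun n hn => ?_
  rw [Nat.div_eq_of_lt (mem_range.mp hn), Nat.mod_eq_of_lt (mem_range.mp hn), Nat.cast_zero,
    zero_add]

/-- The `(n+1)`-st smallest element of `{i + w_j : i ≥ 0, 0 ≤ j ≤ d-1}` is
`⌊n/d⌋ + w_{n mod d}` because `0 ≤ w_0 < ⋯ < w_{d-1} < 1`; this is `hslope`. -/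
theorem stmt_19_general (d : ℕ) (hd : 2 ≤ d) (w : ℕ → ℚ)
    (hsum : ∑ j ∈ Finset.range d, w j = ∑ j ∈ Finset.range d, (j : ℚ) / d)
    (slope : ℕ → ℚ) (hslope : ∀ n : ℕ, slope n = (n / d : ℕ) + w (n % d))
    (N : ℕ → ℚ) (hN : ∀ n : ℕ, N n = ∑ m ∈ Finset.range n, slope m)
    (H : ℕ → ℚ) (hH : ∀ n : ℕ, H n = (n : ℚ) * ((n : ℚ) - 1) / (2 * d))
    (NP : ℝ → ℝ)
    (hNP : ∀ x : ℝ, 0 ≤ x →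
      NP x = (N ⌊x⌋.toNat : ℚ) + (x - ⌊x⌋) * ((slope ⌊x⌋.toNat : ℚ) : ℝ))
    (HP : ℝ → ℝ)
    (hHP : ∀ x : ℝ, 0 ≤ x →
      HP x = (H ⌊x⌋.toNat : ℚ) + (x - ⌊x⌋) * ((H (⌊x⌋.toNat + 1) - H ⌊x⌋.toNat : ℚ) : ℝ)) :
    (∀ x : ℝ, 0 ≤ x → NP (x + d) - HP (x + d) = NP x - HP x) ∧
    ∃ n : ℕ, n ≤ d ∧ ∀ x : ℝ, 0 ≤ x → NP x - HP x ≤ NP n - HP n := by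
  have hd₀ : 0 < d := by omega
  set D : ℕ → ℝ := fun n => ((N n - H n : ℚ) : ℝ)
  have hD : Periodic D d := by
    have hg := (periodic_div_add_mod_sub_div w hd₀.ne').sum_range
      (by rw [sum_range_div_add_mod_sub_div, hsum, sub_self])
    refine Periodic.comp (fun n => ?_) ((↑) : ℚ → ℝ)
    simpa only [hN, hH, ← sum_range_natCast_div, ← sum_sub_distrib, hslope] using hg n
  have hform : ∀ x : ℝ, 0 ≤ x → NP x - HP x = natInterp D x := by
    intro x hx
    have hslope_eq : slope ⌊x⌋.toNat = N (⌊x⌋.toNat + 1) - N ⌊x⌋.toNat := by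
      rw [hN, hN, sum_range_succ, add_sub_cancel_left]
    rw [hNP x hx, hHP x hx, natInterp_eq_intFloor D hx, hslope_eq]
    simp only [D]
    push_cast
    ring
  obtain ⟨n₀, hn₀, hmax⟩ := hD.exists_lt_forall_le_nat hd₀
  refine ⟨fun x hx => ?_, n₀, hn₀.le, fun x hx => ?_⟩
  · rw [hform _ (by positivity), hform x hx, natInterp_add_period hD hx]
  · rw [hform x hx, hform n₀ n₀.cast_nonneg, natInterp_natCast]
    exact natInterp_le hmax hx

/-- `NP(f,·) - HP(f,·)` is periodic with period `d` and attains its maximum at an integer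
point in `[0, d]`. Here `NP(f,·)` is the piecewise linear function with `NP(f,0) = 0` whose
slope on `[n, n+1]` is the `(n+1)`-st smallest element of `{i + w_j : i ≥ 0, 0 ≤ j ≤ d-1}`
(namely `⌊n/d⌋ + w_{n mod d}`, since `0 ≤ w_0 < ⋯ < w_{d-1} < 1`), and `HP(f,·)` is the
piecewise linear function with `HP(f,n) = n(n-1)/(2d)` at integers `n`. -/
theorem stmt_19 (d : ℕ) (hd : 2 ≤ d) (w : ℕ → ℚ)
    (hw0 : 0 ≤ w 0)
    (hmono : ∀ i j : ℕ, i < j → j ≤ d - 1 → w i < w j)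
    (hlt : ∀ i : ℕ, i ≤ d - 1 → w i < 1)
    (hsum : ∑ j ∈ Finset.range d, w j = ∑ j ∈ Finset.range d, (j : ℚ) / d)
    (slope : ℕ → ℚ) (hslope : ∀ n : ℕ, slope n = (n / d : ℕ) + w (n % d))
    (N : ℕ → ℚ) (hN : ∀ n : ℕ, N n = ∑ m ∈ Finset.range n, slope m)
    (H : ℕ → ℚ) (hH : ∀ n : ℕ, H n = (n : ℚ) * ((n : ℚ) - 1) / (2 * d))
    (NP : ℝ → ℝ)
    (hNP : ∀ x : ℝ, 0 ≤ x →
      NP x = (N ⌊x⌋.toNat : ℚ) + (x - ⌊x⌋) * ((slope ⌊x⌋.toNat : ℚ) : ℝ))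
    (HP : ℝ → ℝ)
    (hHP : ∀ x : ℝ, 0 ≤ x →
      HP x = (H ⌊x⌋.toNat : ℚ) + (x - ⌊x⌋) * ((H (⌊x⌋.toNat + 1) - H ⌊x⌋.toNat : ℚ) : ℝ)) :
    (∀ x : ℝ, 0 ≤ x → NP (x + d) - HP (x + d) = NP x - HP x) ∧
    ∃ n : ℕ, n ≤ d ∧ ∀ x : ℝ, 0 ≤ x → NP x - HP x ≤ NP n - HP n :=
  stmt_19_general d hd w hsum slope hslope N hN H hH NP hNP HP hHP
end
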